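/- Fix real parameters α, γ, ε > 0 and η > 0. There exists δ₀ > 0 such that for every δ ≥ δ₀ and every β with εβ ≥ 1 + η: the series defining Σ₁(P₃₄(β),β), Σ₂(P₃₄(β),β) and g(β) converge, g(β) < 1, and F(β) = Σ₁(P₃₄(β),β) + Σ₂(P₃₄(β),β)·e^{-αβ-P₃₄(β)}/(1 - g(β)) < 1. Consequently, for δ ≥ δ₀ the unique β_c solving F(β_c) = 1 satisfies ε·β_c < 1 + η. (The paper's claim in 'Values for εβ_c': letting δ → +∞ with ε fixed forces εβ_c → 1; in particular εβ_c < 2 for δ sufficiently large, so that at β = β_c no second equilibrium state giving weight to [1] exists.) -/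
import Mathlib


/-- `P₃₄(β) = γβ + log(1 + e^{δβ})` (depends on the parameter `δ`). -/
noncomputable def P34 (γ δ β : ℝ) : ℝ := γ * β + Real.log (1 + Real.exp (δ * β))

/-- `Σ₁(Z,β) = ∑_{n=1}^∞ e^{-n(αβ+Z)}` (indexed by `n : ℕ` via `n ↦ n+1`). -/
noncomputable def S1 (α β Z : ℝ) : ℝ := ∑' n : ℕ, Real.exp (-((n : ℝ) + 1) * (α * β + Z))

/-- `Σ₂(Z,β) = ∑_{n=1}^∞ (n+1)^{-β} e^{-nZ}`. -/
noncomputable def S2 (β Z : ℝ) : ℝ :=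
  ∑' n : ℕ, ((n : ℝ) + 2) ^ (-β) * Real.exp (-((n : ℝ) + 1) * Z)

/-- `Σ₃(Z,β) = (1+e^{δβ})^{-2} ∑_{n=1}^∞ (n+1)^{-εβ} e^{n(P₃₄(β)-Z)}`. -/
noncomputable def S3 (γ δ ε β Z : ℝ) : ℝ :=
  (∑' n : ℕ, ((n : ℝ) + 2) ^ (-(ε * β)) * Real.exp (((n : ℝ) + 1) * (P34 γ δ β - Z))) /
    (1 + Real.exp (δ * β)) ^ 2

/-- `g(β) = Σ₂(P₃₄(β),β)·Σ₃(P₃₄(β),β)`. -/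
noncomputable def g (γ δ ε β : ℝ) : ℝ := S2 β (P34 γ δ β) * S3 γ δ ε β (P34 γ δ β)

/-- `F(β) = Σ₁(P₃₄(β),β) + Σ₂(P₃₄(β),β)·e^{-αβ-P₃₄(β)}/(1 - g(β))`. -/
noncomputable def F (α γ δ ε β : ℝ) : ℝ :=
  S1 α β (P34 γ δ β) +
    S2 β (P34 γ δ β) * Real.exp (-(α * β) - P34 γ δ β) / (1 - g γ δ ε β)

private lemma exp_term_eq (X : ℝ) (n : ℕ) :
    Real.exp (-((n : ℝ) + 1) * X) = Real.exp (-X) ^ (n + 1) := by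
  rw [← Real.exp_nat_mul]
  congr 1
  push_cast
  ring

private lemma geo_summable {X : ℝ} (hX : 0 < X) :
    Summable (fun n : ℕ => Real.exp (-((n : ℝ) + 1) * X)) := by
  have hr1 : Real.exp (-X) < 1 := by
    calc Real.exp (-X) < Real.exp 0 := Real.exp_lt_exp.mpr (by linarith)
    _ = 1 := Real.exp_zero
  have h : Summable (fun n : ℕ => Real.exp (-X) ^ n * Real.exp (-X)) :=
    (summable_geometric_of_lt_one (Real.exp_nonneg _) hr1).mul_right _
  refine h.congr fun n => ?_
  rw [exp_term_eq, pow_succ]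

private lemma geo_tsum_le {X E : ℝ} (hXE : Real.exp (-X) ≤ E) (hE : E ≤ 1/2) :
    ∑' n : ℕ, Real.exp (-((n : ℝ) + 1) * X) ≤ 2 * E := by
  have h0 : 0 ≤ Real.exp (-X) := Real.exp_nonneg _
  have hr1 : Real.exp (-X) < 1 := lt_of_le_of_lt hXE (by linarith)
  have heq : ∑' n : ℕ, Real.exp (-((n : ℝ) + 1) * X)
      = Real.exp (-X) * (1 - Real.exp (-X))⁻¹ := by
    simp_rw [exp_term_eq, pow_succ]
    rw [tsum_mul_right, tsum_geometric_of_lt_one h0 hr1]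
    ring
  rw [heq]
  set r := Real.exp (-X) with hr
  have h1r : (0:ℝ) < 1 - r := by linarith
  rw [← div_eq_mul_inv, div_le_iff₀ h1r]
  nlinarith

private lemma pser_summable {s : ℝ} (hs : 1 < s) :
    Summable (fun n : ℕ => ((n : ℝ) + 2) ^ (-s)) := by
  have h : Summable (fun n : ℕ => (n : ℝ) ^ (-s)) :=
    Real.summable_nat_rpow.mpr (by linarith)
  have h2 : Summable (fun n : ℕ => ((n + 2 : ℕ) : ℝ) ^ (-s)) :=
    (summable_nat_add_iff (f := fun n : ℕ => (n : ℝ) ^ (-s)) 2).mpr h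
  refine h2.congr fun n => ?_
  push_cast
  ring_nf

set_option maxHeartbeats 1000000 in
/-- The paper's claim in "Values for εβ_c": for fixed `α, γ, ε > 0` and any `η > 0`,
for all sufficiently large `δ` one has, for every `β` with `εβ ≥ 1 + η`: all the series
defining `Σ₁(P₃₄(β),β)`, `Σ₂(P₃₄(β),β)` and `g(β)` converge, `g(β) < 1` and `F(β) < 1`.
Consequently any `β_c` solving `F(β_c) = 1` satisfies `ε β_c < 1 + η`. -/
theorem stmt_16 (α γ ε η : ℝ) (hα : 0 < α) (hγ : 0 < γ) (hε : 0 < ε) (hη : 0 < η) :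
    ∃ δ₀ > 0, ∀ δ, δ₀ ≤ δ →
      (∀ β, 1 + η ≤ ε * β →
        Summable (fun n : ℕ => Real.exp (-((n : ℝ) + 1) * (α * β + P34 γ δ β))) ∧
        Summable (fun n : ℕ =>
          ((n : ℝ) + 2) ^ (-β) * Real.exp (-((n : ℝ) + 1) * P34 γ δ β)) ∧
        Summable (fun n : ℕ =>
          ((n : ℝ) + 2) ^ (-(ε * β)) *
            Real.exp (((n : ℝ) + 1) * (P34 γ δ β - P34 γ δ β))) ∧
        g γ δ ε β < 1 ∧ F α γ δ ε β < 1) ∧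
      (∀ βc, F α γ δ ε βc = 1 → ε * βc < 1 + η) := by
  have hCsum : Summable (fun n : ℕ => ((n : ℝ) + 2) ^ (-(1 + η))) :=
    pser_summable (by linarith)
  obtain ⟨C, hCdef⟩ : ∃ C : ℝ, C = ∑' n : ℕ, ((n : ℝ) + 2) ^ (-(1 + η)) := ⟨_, rfl⟩
  have hCpos : 0 < C := by
    rw [hCdef]
    exact Summable.tsum_pos hCsum (fun n => Real.rpow_nonneg (by positivity) _) 0
      (Real.rpow_pos_of_pos (by norm_num) _)
  have hx : (0 : ℝ) < 6 + 6 * C := by linarith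
  obtain ⟨M, hMdef⟩ : ∃ M : ℝ, M = Real.log (6 + 6 * C) + 1 := ⟨_, rfl⟩
  have hM1 : 1 ≤ M := by
    have := Real.log_nonneg (by linarith : (1:ℝ) ≤ 6 + 6 * C)
    rw [hMdef]; linarith
  obtain ⟨E, hEdef⟩ : ∃ E : ℝ, E = Real.exp (-M) := ⟨_, rfl⟩
  have hE0 : 0 ≤ E := hEdef ▸ Real.exp_nonneg _
  have hE1 : E * (6 + 6 * C) ≤ 1 := by
    have hEeq : E = Real.exp (-1) * (6 + 6 * C)⁻¹ := by
      rw [hEdef, show -M = -1 + -Real.log (6 + 6 * C) by rw [hMdef]; ring,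
        Real.exp_add, Real.exp_neg, Real.exp_neg, Real.exp_log hx]
    have h1 : Real.exp (-1 : ℝ) ≤ 1 := by
      calc Real.exp (-1 : ℝ) ≤ Real.exp 0 := Real.exp_le_exp.mpr (by norm_num)
      _ = 1 := Real.exp_zero
    rw [hEeq, mul_assoc, inv_mul_cancel₀ (ne_of_gt hx), mul_one]
    exact h1
  have hE6 : E ≤ 1/6 := by nlinarith
  have hEC : 6 * (E * C) ≤ 1 := by nlinarith
  refine ⟨M * ε / (1 + η), by positivity, ?_⟩
  intro δ hδ
  have key : ∀ β, 1 + η ≤ ε * β →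
      Summable (fun n : ℕ => Real.exp (-((n : ℝ) + 1) * (α * β + P34 γ δ β))) ∧
      Summable (fun n : ℕ =>
        ((n : ℝ) + 2) ^ (-β) * Real.exp (-((n : ℝ) + 1) * P34 γ δ β)) ∧
      Summable (fun n : ℕ =>
        ((n : ℝ) + 2) ^ (-(ε * β)) *
          Real.exp (((n : ℝ) + 1) * (P34 γ δ β - P34 γ δ β))) ∧
      g γ δ ε β < 1 ∧ F α γ δ ε β < 1 := by
    intro β hβ
    have hβpos : 0 < β := by nlinarith
    have hδβ : M ≤ δ * β := by
      have h1 : M * ε / (1 + η) * β ≤ δ * β := mul_le_mul_of_nonneg_right hδ hβpos.le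
      have h2 : M ≤ M * ε / (1 + η) * β := by
        rw [div_mul_eq_mul_div, le_div_iff₀ (by linarith : (0:ℝ) < 1 + η)]
        calc M * (1 + η) ≤ M * (ε * β) :=
              mul_le_mul_of_nonneg_left hβ (by linarith)
          _ = M * ε * β := by ring
      linarith
    obtain ⟨P, hPdef⟩ : ∃ P : ℝ, P = P34 γ δ β := ⟨_, rfl⟩
    rw [← hPdef]
    have hδβP : δ * β ≤ P := by
      rw [hPdef]
      unfold P34
      have h1 : δ * β ≤ Real.log (1 + Real.exp (δ * β)) := by
        rw [← Real.log_exp (δ * β)]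
        have h2 : Real.exp (δ * β) ≤ 1 + Real.exp (Real.log (Real.exp (δ * β))) := by
          rw [Real.log_exp]; linarith
        exact Real.log_le_log (Real.exp_pos _) (by rw [Real.log_exp] at h2 ⊢; linarith)
      nlinarith
    have hMP : M ≤ P := le_trans hδβ hδβP
    have hPpos : 0 < P := by linarith
    have hαβ : 0 < α * β := by positivity
    have hXpos : 0 < α * β + P := by linarith
    -- summabilities
    have hsum1 : Summable (fun n : ℕ => Real.exp (-((n : ℝ) + 1) * (α * β + P))) :=
      geo_summable hXpos
    have hgeoP : Summable (fun n : ℕ => Real.exp (-((n : ℝ) + 1) * P)) :=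
      geo_summable hPpos
    have hterm2' : ∀ n : ℕ,
        0 ≤ ((n : ℝ) + 2) ^ (-β) * Real.exp (-((n : ℝ) + 1) * P) := fun n =>
      mul_nonneg (Real.rpow_nonneg (by positivity) _) (Real.exp_nonneg _)
    have hterm2 : ∀ n : ℕ,
        ((n : ℝ) + 2) ^ (-β) * Real.exp (-((n : ℝ) + 1) * P) ≤
          Real.exp (-((n : ℝ) + 1) * P) := by
      intro n
      have h1 : ((n : ℝ) + 2) ^ (-β) ≤ 1 :=
        Real.rpow_le_one_of_one_le_of_nonpos
          (by have : (0:ℝ) ≤ (n:ℝ) := Nat.cast_nonneg n; linarith) (by linarith)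
      nlinarith [Real.exp_nonneg (-((n : ℝ) + 1) * P),
        Real.rpow_nonneg (show (0:ℝ) ≤ (n : ℝ) + 2 by positivity) (-β)]
    have hsum2 : Summable (fun n : ℕ =>
        ((n : ℝ) + 2) ^ (-β) * Real.exp (-((n : ℝ) + 1) * P)) :=
      Summable.of_nonneg_of_le hterm2' hterm2 hgeoP
    have hsumεβ : Summable (fun n : ℕ => ((n : ℝ) + 2) ^ (-(ε * β))) :=
      pser_summable (by linarith)
    have hsum3 : Summable (fun n : ℕ =>
        ((n : ℝ) + 2) ^ (-(ε * β)) * Real.exp (((n : ℝ) + 1) * (P - P))) := by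
      simpa [sub_self] using hsumεβ
    -- bounds
    have hexpP : Real.exp (-P) ≤ E := by
      rw [hEdef]; exact Real.exp_le_exp.mpr (by linarith)
    have hE12 : E ≤ 1/2 := by linarith
    have hS2nonneg : 0 ≤ S2 β P := tsum_nonneg hterm2'
    have hS2le : S2 β P ≤ 2 * E := by
      unfold S2
      exact le_trans (Summable.tsum_le_tsum hterm2 hsum2 hgeoP) (geo_tsum_le hexpP hE12)
    have hden1 : 1 ≤ (1 + Real.exp (δ * β)) ^ 2 := by
      nlinarith [Real.exp_pos (δ * β)]
    have hnum_nonneg : 0 ≤ ∑' n : ℕ,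
        ((n : ℝ) + 2) ^ (-(ε * β)) * Real.exp (((n : ℝ) + 1) * (P - P)) :=
      tsum_nonneg fun n =>
        mul_nonneg (Real.rpow_nonneg (by positivity) _) (Real.exp_nonneg _)
    have hnum_le : (∑' n : ℕ,
        ((n : ℝ) + 2) ^ (-(ε * β)) * Real.exp (((n : ℝ) + 1) * (P - P))) ≤ C := by
      rw [hCdef]
      refine Summable.tsum_le_tsum (fun n => ?_) hsum3 hCsum
      have h1 : ((n : ℝ) + 2) ^ (-(ε * β)) ≤ ((n : ℝ) + 2) ^ (-(1 + η)) :=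
        Real.rpow_le_rpow_of_exponent_le
          (by have : (0:ℝ) ≤ (n:ℝ) := Nat.cast_nonneg n; linarith) (by linarith)
      simpa [sub_self] using h1
    have hS3nonneg : 0 ≤ S3 γ δ ε β P := by
      unfold S3
      rw [← hPdef]
      exact div_nonneg hnum_nonneg (by positivity)
    have hS3le : S3 γ δ ε β P ≤ C := by
      unfold S3
      rw [← hPdef]
      exact le_trans (div_le_self hnum_nonneg hden1) hnum_le
    have hg_nonneg : 0 ≤ g γ δ ε β := by
      unfold g; rw [← hPdef]; exact mul_nonneg hS2nonneg hS3nonneg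
    have hgle : g γ δ ε β ≤ 1/3 := by
      have h1 : g γ δ ε β ≤ 2 * E * C := by
        unfold g; rw [← hPdef]
        exact mul_le_mul hS2le hS3le hS3nonneg (by linarith)
      nlinarith
    have hglt : g γ δ ε β < 1 := by linarith
    -- F bound
    have hS1le : S1 α β P ≤ 2 * E := by
      unfold S1
      refine geo_tsum_le ?_ hE12
      rw [hEdef]; exact Real.exp_le_exp.mpr (by linarith)
    have hS1nonneg : 0 ≤ S1 α β P := tsum_nonneg fun n => Real.exp_nonneg _
    have hexp2 : Real.exp (-(α * β) - P) ≤ E := by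
      rw [hEdef]; exact Real.exp_le_exp.mpr (by linarith)
    have hF : F α γ δ ε β < 1 := by
      unfold F
      rw [← hPdef]
      have h13 : (0:ℝ) < 1 - g γ δ ε β := by linarith
      have hN : S2 β P * Real.exp (-(α * β) - P) ≤ 2 * E * E :=
        mul_le_mul hS2le hexp2 (Real.exp_nonneg _) (by linarith)
      have hN0 : 0 ≤ S2 β P * Real.exp (-(α * β) - P) :=
        mul_nonneg hS2nonneg (Real.exp_nonneg _)
      have hT : S2 β P * Real.exp (-(α * β) - P) / (1 - g γ δ ε β) ≤ 3 * E * E := by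
        rw [div_le_iff₀ h13]
        nlinarith [mul_le_mul_of_nonneg_left hgle (mul_nonneg (mul_nonneg (by norm_num) hE0) hE0 : (0:ℝ) ≤ 3 * E * E)]
      nlinarith
    exact ⟨hsum1, hsum2, hsum3, hglt, hF⟩
  refine ⟨key, ?_⟩
  intro βc hFc
  by_contra h
  push_neg at h
  have hlt := (key βc h).2.2.2.2
  rw [hFc] at hlt
  exact lt_irrefl _ hlt
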